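/- Consider the semidefinite program inf { Tr[Ω(σ_k ⊗ ρ)] : 0 ≤ Ω ≤ 𝟙, Tr[Ω(Φ⁺_{d_k} ⊗ ρ)] ≥ 1−ε } over Hermitian operators Ω, where σ_k = (1/d_k)Σ_i|ii⟩⟨ii|, Φ⁺_{d_k} is the maximally entangled state of Schmidt rank d_k, ρ is any density operator, and ε ∈ [0,1]. Its optimal value is at least (1−ε)/d_k. -/

import Mathlib

/-! Weak duality with the dual point `y = 1/d`, `Y = 0`. The operator `d σ` is the projection onto
`span {|ii⟩}` and `Φ⁺` the projection onto a unit vector of that span, so `d σ - Φ⁺` is again a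
projection and `Φ⁺ / d ≤ σ`. Tensoring with `ρ ≥ 0` and pairing with `Ω ≥ 0` preserves this, whence
`Tr[Ω(σ ⊗ ρ)] ≥ Tr[Ω(Φ⁺ ⊗ ρ)] / d ≥ (1 - ε) / d`. -/

open Matrix
open scoped BigOperators ComplexOrder

noncomputable section

namespace KeyCost

/-- A density operator: positive semidefinite with unit trace. -/
def IsDensity {n : Type*} [Fintype n] (M : Matrix n n ℂ) : Prop :=
  M.PosSemidef ∧ M.trace = 1

/-- Von Neumann entropy (base 2), via eigenvalues of a Hermitian matrix. -/
noncomputable def vNEntropy {n : Type*} [Fintype n] [DecidableEq n] (M : Matrix n n ℂ) : ℝ :=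
  if h : M.IsHermitian then -∑ i, h.eigenvalues i * Real.logb 2 (h.eigenvalues i) else 0

/-- Matrix logarithm (base 2) of a Hermitian matrix via the spectral theorem. -/
noncomputable def matLog {n : Type*} [Fintype n] [DecidableEq n] (M : Matrix n n ℂ) : Matrix n n ℂ :=
  if h : M.IsHermitian then
    (h.eigenvectorUnitary : Matrix n n ℂ) *
      Matrix.diagonal (fun i => (Real.logb 2 (h.eigenvalues i) : ℂ)) *
      (h.eigenvectorUnitary : Matrix n n ℂ)ᴴ
  else 0

/-- Quantum relative entropy  D(ρ‖σ) = Tr[ρ (log ρ − log σ)]  (base 2). -/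
noncomputable def relEnt {n : Type*} [Fintype n] [DecidableEq n] (ρ σ : Matrix n n ℂ) : ℝ :=
  ((ρ * (matLog ρ - matLog σ)).trace).re

/-- Partial trace over the second (Bob's) factor. -/
def ptraceRight {α β : Type*} [Fintype β] (M : Matrix (α × β) (α × β) ℂ) : Matrix α α ℂ :=
  Matrix.of fun a a' => ∑ b, M (a, b) (a', b)

/-- Tensor (Kronecker) product of two square matrices, on the product index type. -/
def prodMat {α β : Type*} (A : Matrix α α ℂ) (B : Matrix β β ℂ) : Matrix (α × β) (α × β) ℂ :=
  Matrix.of fun p q => A p.1 q.1 * B p.2 q.2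

/-- Separability across the `α : β` cut. -/
def IsSeparable {α β : Type*} [Fintype α] [Fintype β] (σ : Matrix (α × β) (α × β) ℂ) : Prop :=
  ∃ (m : ℕ) (p : Fin m → ℝ) (a : Fin m → Matrix α α ℂ) (b : Fin m → Matrix β β ℂ),
    (∀ k, 0 ≤ p k) ∧ (∑ k, p k = 1) ∧ (∀ k, IsDensity (a k)) ∧ (∀ k, IsDensity (b k)) ∧
    σ = ∑ k, (p k : ℂ) • prodMat (a k) (b k)

/-- Trace norm of a Hermitian matrix (sum of absolute values of eigenvalues). -/
noncomputable def traceNorm {n : Type*} [Fintype n] [DecidableEq n] (M : Matrix n n ℂ) : ℝ :=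
  if h : M.IsHermitian then ∑ i, |h.eigenvalues i| else 0

/-- Normalized trace distance (1/2)‖ρ − σ‖₁. -/
noncomputable def traceDist {n : Type*} [Fintype n] [DecidableEq n] (ρ σ : Matrix n n ℂ) : ℝ :=
  (1 / 2) * traceNorm (ρ - σ)

/-- Product Kraus operator E ⊗ F. -/
def locKraus {dA dB dA' dB' : Type*} (E : Matrix dA' dA ℂ) (F : Matrix dB' dB ℂ) :
    Matrix (dA' × dB') (dA × dB) ℂ :=
  Matrix.of fun p q => E p.1 q.1 * F p.2 q.2

/-- LOCC channel (modelled by its Kraus decomposition into product operators). -/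
def IsLOCC {dA dB dA' dB' : Type*} [Fintype dA] [Fintype dB] [Fintype dA'] [Fintype dB']
    [DecidableEq dA] [DecidableEq dB] [DecidableEq dA'] [DecidableEq dB']
    (Λ : Matrix (dA × dB) (dA × dB) ℂ → Matrix (dA' × dB') (dA' × dB') ℂ) : Prop :=
  ∃ (m : ℕ) (E : Fin m → Matrix dA' dA ℂ) (F : Fin m → Matrix dB' dB ℂ),
    (∑ x, (locKraus (E x) (F x))ᴴ * locKraus (E x) (F x) = 1) ∧
    ∀ ρ, Λ ρ = ∑ x, locKraus (E x) (F x) * ρ * (locKraus (E x) (F x))ᴴ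

/-- The Hilbert space of a private state with key dimension `dk` and shield dimension `ds`:
Alice holds `Fin dk × Fin ds`, Bob holds `Fin dk × Fin ds`. -/
abbrev SIRSpace (dk ds : ℕ) := (Fin dk × Fin ds) × (Fin dk × Fin ds)

/-- Strictly irreducible private state
`γ = (1/dk) Σ_{i,j} |ii⟩⟨jj| ⊗ U_i ρS U_j†` with each `U_i ρS U_i†` separable. -/
def IsSIR {dk ds : ℕ} (γ : Matrix (SIRSpace dk ds) (SIRSpace dk ds) ℂ) : Prop :=
  ∃ (U : Fin dk → Matrix (Fin ds × Fin ds) (Fin ds × Fin ds) ℂ)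
    (ρS : Matrix (Fin ds × Fin ds) (Fin ds × Fin ds) ℂ),
    (∀ i, U i ∈ Matrix.unitaryGroup (Fin ds × Fin ds) ℂ) ∧
    IsDensity ρS ∧
    (∀ i, IsSeparable (U i * ρS * (U i)ᴴ)) ∧
    ∀ p q : SIRSpace dk ds,
      γ p q =
        if p.1.1 = p.2.1 ∧ q.1.1 = q.2.1 then
          (1 / (dk : ℂ)) * (U p.1.1 * ρS * (U q.1.1)ᴴ) (p.1.2, p.2.2) (q.1.2, q.2.2)
        else 0

/-- One-shot key cost. -/
noncomputable def KCone {dA dB : Type*} [Fintype dA] [Fintype dB] [DecidableEq dA] [DecidableEq dB]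
    (ε : ℝ) (ρ : Matrix (dA × dB) (dA × dB) ℂ) : ℝ :=
  sInf {r : ℝ | ∃ (dk ds : ℕ) (γ : Matrix (SIRSpace dk ds) (SIRSpace dk ds) ℂ)
      (Λ : Matrix (SIRSpace dk ds) (SIRSpace dk ds) ℂ → Matrix (dA × dB) (dA × dB) ℂ),
      IsSIR γ ∧ IsLOCC Λ ∧ traceDist (Λ γ) ρ ≤ ε ∧ r = Real.logb 2 dk}

/-- One-shot distillable key. -/
noncomputable def KDone {dA dB : Type*} [Fintype dA] [Fintype dB] [DecidableEq dA] [DecidableEq dB]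
    (ε : ℝ) (ρ : Matrix (dA × dB) (dA × dB) ℂ) : ℝ :=
  sSup {r : ℝ | ∃ (dk ds : ℕ) (γ : Matrix (SIRSpace dk ds) (SIRSpace dk ds) ℂ)
      (Λ : Matrix (dA × dB) (dA × dB) ℂ → Matrix (SIRSpace dk ds) (SIRSpace dk ds) ℂ),
      IsSIR γ ∧ IsLOCC Λ ∧ traceDist (Λ ρ) γ ≤ ε ∧ r = Real.logb 2 dk}

/-- n-fold tensor power of a bipartite state, with the bipartite cut `A^n : B^n`. -/
def powState {dA dB : Type*} [Fintype dA] [Fintype dB]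
    (ρ : Matrix (dA × dB) (dA × dB) ℂ) (n : ℕ) :
    Matrix ((Fin n → dA) × (Fin n → dB)) ((Fin n → dA) × (Fin n → dB)) ℂ :=
  Matrix.of fun p q => ∏ i, ρ (p.1 i, p.2 i) (q.1 i, q.2 i)

/-- Asymptotic key cost. -/
noncomputable def KCost {dA dB : Type*} [Fintype dA] [Fintype dB] [DecidableEq dA] [DecidableEq dB]
    (ρ : Matrix (dA × dB) (dA × dB) ℂ) : ℝ :=
  ⨆ ε ∈ Set.Ioo (0 : ℝ) 1,
    Filter.limsup (fun n : ℕ => KCone ε (powState ρ n) / n) Filter.atTop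

/-- Relative entropy of entanglement. -/
noncomputable def ER {α β : Type*} [Fintype α] [Fintype β] [DecidableEq α] [DecidableEq β]
    (ρ : Matrix (α × β) (α × β) ℂ) : ℝ :=
  sInf {x : ℝ | ∃ σ : Matrix (α × β) (α × β) ℂ, IsSeparable σ ∧ x = relEnt ρ σ}

/-- ε-hypothesis-testing relative entropy. -/
noncomputable def Dh {n : Type*} [Fintype n] [DecidableEq n] (ε : ℝ) (ρ σ : Matrix n n ℂ) : ℝ :=
  -Real.logb 2 (sInf {x : ℝ | ∃ Λ : Matrix n n ℂ, Λ.PosSemidef ∧ (1 - Λ).PosSemidef ∧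
      1 - ε ≤ ((Λ * ρ).trace).re ∧ x = ((Λ * σ).trace).re})

/-- A strictly irreducible generalized private state with key-part entropy `h`:
up to local unitaries and index reshuffling it has the canonical twisted form
`Σ_{i,j} √(μ_i μ_j) |e_i f_i⟩⟨e_j f_j| ⊗ U_i ρS U_j†` with separable conditional shields. -/
def IsGSIRwithEnt {dA dB : Type*} [Fintype dA] [Fintype dB] [DecidableEq dA] [DecidableEq dB]
    (γ : Matrix (dA × dB) (dA × dB) ℂ) (h : ℝ) : Prop :=
  ∃ (k sA sB : ℕ) (eA : dA ≃ Fin k × Fin sA) (eB : dB ≃ Fin k × Fin sB)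
    (VA : Matrix dA dA ℂ) (VB : Matrix dB dB ℂ)
    (μ : Fin k → ℝ) (U : Fin k → Matrix (Fin sA × Fin sB) (Fin sA × Fin sB) ℂ)
    (ρS : Matrix (Fin sA × Fin sB) (Fin sA × Fin sB) ℂ),
    VA ∈ Matrix.unitaryGroup dA ℂ ∧ VB ∈ Matrix.unitaryGroup dB ℂ ∧
    (∀ i, 0 ≤ μ i) ∧ (∑ i, μ i = 1) ∧
    (∀ i, U i ∈ Matrix.unitaryGroup (Fin sA × Fin sB) ℂ) ∧
    IsDensity ρS ∧
    (∀ i, IsSeparable (U i * ρS * (U i)ᴴ)) ∧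
    (∀ p q : dA × dB,
      (prodMat VA VB * γ * (prodMat VA VB)ᴴ) p q =
        if (eA p.1).1 = (eB p.2).1 ∧ (eA q.1).1 = (eB q.2).1 then
          (Real.sqrt (μ (eA p.1).1 * μ (eA q.1).1) : ℂ) *
            (U (eA p.1).1 * ρS * (U (eA q.1).1)ᴴ) ((eA p.1).2, (eB p.2).2) ((eA q.1).2, (eB q.2).2)
        else 0) ∧
    h = -∑ i, μ i * Real.logb 2 (μ i)

/-- A strictly irreducible generalized private state. -/
def IsGSIR {dA dB : Type*} [Fintype dA] [Fintype dB] [DecidableEq dA] [DecidableEq dB]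
    (γ : Matrix (dA × dB) (dA × dB) ℂ) : Prop :=
  ∃ h, IsGSIRwithEnt γ h

/-- Key of formation: infimum of the average key-part entropy over finite decompositions
into strictly irreducible generalized private states. -/
noncomputable def KF {dA dB : Type*} [Fintype dA] [Fintype dB] [DecidableEq dA] [DecidableEq dB]
    (ρ : Matrix (dA × dB) (dA × dB) ℂ) : ℝ :=
  sInf {r : ℝ | ∃ (N : ℕ) (p : Fin N → ℝ) (γ : Fin N → Matrix (dA × dB) (dA × dB) ℂ)
      (h : Fin N → ℝ),
      (∀ k, 0 ≤ p k) ∧ (∑ k, p k = 1) ∧ (∀ k, IsDensity (γ k)) ∧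
      (∀ k, IsGSIRwithEnt (γ k) (h k)) ∧ (∑ k, (p k : ℂ) • γ k = ρ) ∧
      r = ∑ k, p k * h k}


/-- The maximally entangled state `Φ⁺ = (1/d) Σ_{i,j} |ii⟩⟨jj|` on `ℂ^d ⊗ ℂ^d`. -/
def maxEnt (d : ℕ) : Matrix (Fin d × Fin d) (Fin d × Fin d) ℂ :=
  Matrix.of fun p q => if p.1 = p.2 ∧ q.1 = q.2 then 1 / (d : ℂ) else 0

/-- The dephased maximally entangled state `σ = (1/d) Σ_i |ii⟩⟨ii|`. -/
def dephasedMaxEnt (d : ℕ) : Matrix (Fin d × Fin d) (Fin d × Fin d) ℂ :=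
  Matrix.of fun p q => if p.1 = p.2 ∧ p = q then 1 / (d : ℂ) else 0

end KeyCost

open scoped Kronecker MatrixOrder

namespace Matrix

section StarProjection

variable {ι 𝕜 : Type*} [Fintype ι] [RCLike 𝕜]

theorem isStarProjection_inv_dotProduct_smul_vecMulVec (w : ι → 𝕜) :
    IsStarProjection ((star w ⬝ᵥ w)⁻¹ • vecMulVec w (star w)) where
  isIdempotentElem := by
    rw [IsIdempotentElem, smul_mul_smul, vecMulVec_mul_vecMulVec, vecMulVec_smul, smul_smul]
    congr 1
    simpa only [inv_inv, mul_right_comm] using mul_inv_mul_cancel (star w ⬝ᵥ w)⁻¹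
  isSelfAdjoint := by
    rw [IsSelfAdjoint, star_smul, star_inv₀, ← star_dotProduct, star_eq_conjTranspose,
      conjTranspose_vecMulVec, star_star]

theorem isStarProjection_diagonal [DecidableEq ι] {v : ι → 𝕜} (hv_idem : v * v = v)
    (hv_star : star v = v) : IsStarProjection (diagonal v) where
  isIdempotentElem := by
    rw [IsIdempotentElem, diagonal_mul_diagonal]
    exact congrArg diagonal hv_idem
  isSelfAdjoint := by rw [IsSelfAdjoint, star_eq_conjTranspose, diagonal_conjTranspose, hv_star]

theorem posSemidef_diagonal_sub_inv_dotProduct_smul_vecMulVec [DecidableEq ι] {v : ι → 𝕜}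
    (hv_idem : v * v = v) (hv_star : star v = v) :
    (diagonal v - (v ⬝ᵥ v)⁻¹ • vecMulVec v v).PosSemidef := by
  have hline := isStarProjection_inv_dotProduct_smul_vecMulVec v
  rw [hv_star] at hline
  have hsub : diagonal v * ((v ⬝ᵥ v)⁻¹ • vecMulVec v v) = (v ⬝ᵥ v)⁻¹ • vecMulVec v v := by
    rw [mul_smul_comm, mul_vecMulVec]
    congr 2
    ext i
    rw [mulVec_diagonal, ← Pi.mul_apply, hv_idem]
  exact nonneg_iff_posSemidef.mp
    (hline.sub_of_mul_eq_right (isStarProjection_diagonal hv_idem hv_star) hsub).nonneg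

end StarProjection

theorem PosSemidef.trace_mul_nonneg {n 𝕜 : Type*} [Fintype n] [RCLike 𝕜] {A B : Matrix n n 𝕜}
    (hA : A.PosSemidef) (hB : B.PosSemidef) : 0 ≤ (A * B).trace := by
  classical
  obtain ⟨C, rfl⟩ := CStarAlgebra.nonneg_iff_eq_star_mul_self.mp hB.nonneg
  rw [star_eq_conjTranspose, ← Matrix.mul_assoc, trace_mul_comm]
  simpa [Matrix.mul_assoc] using (hA.mul_mul_conjTranspose_same C).trace_nonneg

theorem re_trace_mul_kronecker_le_of_le {m n : Type*} [Fintype m] [Fintype n]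
    {Ω : Matrix (m × n) (m × n) ℂ} (hΩ : Ω.PosSemidef) {ρ : Matrix n n ℂ} (hρ : ρ.PosSemidef)
    {A B : Matrix m m ℂ} (hAB : A ≤ B) :
    (Ω * A ⊗ₖ ρ).trace.re ≤ (Ω * B ⊗ₖ ρ).trace.re := by
  have hgap := (Complex.nonneg_iff.mp (hΩ.trace_mul_nonneg (le_iff.mp hAB |>.kronecker hρ))).1
  rw [← sub_add_cancel B A, add_kronecker, Matrix.mul_add, trace_add, Complex.add_re]
  linarith

end Matrix

namespace KeyCost

/-- The unnormalised vector `Σᵢ |ii⟩`. -/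
def diagVec (d : ℕ) : Fin d × Fin d → ℂ := fun p => if p.1 = p.2 then 1 else 0

theorem diagVec_mul_self (d : ℕ) : diagVec d * diagVec d = diagVec d := by
  ext p
  by_cases h : p.1 = p.2 <;> simp [diagVec, h]

theorem star_diagVec (d : ℕ) : star (diagVec d) = diagVec d := by
  ext p
  by_cases h : p.1 = p.2 <;> simp [diagVec, h]

theorem diagVec_dotProduct_self (d : ℕ) : diagVec d ⬝ᵥ diagVec d = d := by
  simp [dotProduct, diagVec, Fintype.sum_prod_type]

theorem maxEnt_eq_smul_vecMulVec (d : ℕ) :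
    maxEnt d = (d : ℂ)⁻¹ • vecMulVec (diagVec d) (diagVec d) := by
  ext p q
  by_cases hp : p.1 = p.2 <;> by_cases hq : q.1 = q.2 <;>
    simp [maxEnt, diagVec, vecMulVec_apply, hp, hq]

theorem dephasedMaxEnt_eq_smul_diagonal (d : ℕ) :
    dephasedMaxEnt d = (d : ℂ)⁻¹ • diagonal (diagVec d) := by
  ext p q
  by_cases hp : p.1 = p.2 <;> by_cases hpq : p = q <;>
    simp [dephasedMaxEnt, diagVec, hp, hpq]

theorem inv_smul_maxEnt_le_dephasedMaxEnt (d : ℕ) :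
    (d : ℝ)⁻¹ • maxEnt d ≤ dephasedMaxEnt d := by
  have hproj := posSemidef_diagonal_sub_inv_dotProduct_smul_vecMulVec (diagVec_mul_self d)
    (star_diagVec d)
  rw [diagVec_dotProduct_self] at hproj
  have hdiff : dephasedMaxEnt d - (d : ℝ)⁻¹ • maxEnt d =
      (d : ℝ)⁻¹ • (diagonal (diagVec d) - (d : ℂ)⁻¹ • vecMulVec (diagVec d) (diagVec d)) := by
    simp only [dephasedMaxEnt_eq_smul_diagonal, maxEnt_eq_smul_vecMulVec, smul_sub,
      RCLike.real_smul_eq_coe_smul (K := ℂ), RCLike.ofReal_inv, RCLike.ofReal_natCast]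
  rw [le_iff, hdiff]
  exact hproj.smul (inv_nonneg.mpr (Nat.cast_nonneg d))

theorem prodMat_eq_kronecker {α β : Type*} (A : Matrix α α ℂ) (B : Matrix β β ℂ) :
    prodMat A B = A ⊗ₖ B :=
  rfl

theorem sdp_lower_bound_general {γt : Type*} [Fintype γt]
    (dk : ℕ) (ε : ℝ)
    (ρ : Matrix γt γt ℂ) (hρ : IsDensity ρ)
    (Ω : Matrix ((Fin dk × Fin dk) × γt) ((Fin dk × Fin dk) × γt) ℂ)
    (hΩ0 : Ω.PosSemidef)
    (hcon : 1 - ε ≤ ((Ω * prodMat (maxEnt dk) ρ).trace).re) :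
    (1 - ε) / dk ≤ ((Ω * prodMat (dephasedMaxEnt dk) ρ).trace).re := by
  rw [prodMat_eq_kronecker] at hcon ⊢
  calc (1 - ε) / dk = (dk : ℝ)⁻¹ * (1 - ε) := div_eq_inv_mul _ _
    _ ≤ (dk : ℝ)⁻¹ * (Ω * maxEnt dk ⊗ₖ ρ).trace.re := by gcongr
    _ = (Ω * ((dk : ℝ)⁻¹ • maxEnt dk) ⊗ₖ ρ).trace.re := by
      rw [smul_kronecker, Matrix.mul_smul, trace_smul, Complex.smul_re, smul_eq_mul]
    _ ≤ (Ω * dephasedMaxEnt dk ⊗ₖ ρ).trace.re :=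
      re_trace_mul_kronecker_le_of_le hΩ0 hρ.1 (inv_smul_maxEnt_le_dephasedMaxEnt dk)

/-- any operator `0 ≤ Ω ≤ 𝟙` with `Tr[Ω(Φ⁺_{dk} ⊗ ρ)] ≥ 1−ε` satisfies
`Tr[Ω(σ_k ⊗ ρ)] ≥ (1−ε)/dk`; i.e. the optimal value of the SDP is at least `(1−ε)/dk`. -/
theorem sdp_lower_bound {γt : Type*} [Fintype γt] [DecidableEq γt]
    (dk : ℕ) (hdk : 1 ≤ dk) (ε : ℝ) (hε : ε ∈ Set.Icc (0 : ℝ) 1)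
    (ρ : Matrix γt γt ℂ) (hρ : IsDensity ρ)
    (Ω : Matrix ((Fin dk × Fin dk) × γt) ((Fin dk × Fin dk) × γt) ℂ)
    (hΩ0 : Ω.PosSemidef) (hΩ1 : (1 - Ω).PosSemidef)
    (hcon : 1 - ε ≤ ((Ω * prodMat (maxEnt dk) ρ).trace).re) :
    (1 - ε) / dk ≤ ((Ω * prodMat (dephasedMaxEnt dk) ρ).trace).re :=
  sdp_lower_bound_general dk ε ρ hρ Ω hΩ0 hcon

end KeyCost
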